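/- arXiv:2312.14761 — 4 statements merged into one kernel-verified Lean document; each statement's English description precedes it below -/
import Mathlib

section
/- Let n be a natural number and let c_r, c_c : Fin n → Fin 3 be colorings of rows and columns such that for each color i the fibers c_r⁻¹(i) and c_c⁻¹(i) have the same cardinality k_i; fix bijections e_i : Fin k_i ≃ c_r⁻¹(i) and f_i : Fin k_i ≃ c_c⁻¹(i). Then for any two color-preserving permutations σ and σ' of Fin n, one has sgn(σ) · ∏_{i∈Fin 3} sgn(f_i⁻¹ ∘ σ ∘ e_i) = sgn(σ') · ∏_{i∈Fin 3} sgn(f_i⁻¹ ∘ σ' ∘ e_i). In other words, the ratio between the sign of a color-preserving permutation and the product of the signs of its three restricted permutations does not depend on the permutation. -/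
/-!
Enumerating `Fin n` colour by colour through the `e i` (resp. the `f i`) gives two bijections
`E, F : Fin n ≃ Σ i, Fin (k i)`, and a colour-preserving `σ` is `F⁻¹ ∘ ρ ∘ E`, where `ρ` acts on
the `i`-th summand by the restriction of `σ` to colour `i`. Hence
`sgn σ = sgn ρ · sgn (F⁻¹ ∘ E) = (∏ i, sgn ρᵢ) · sgn (F⁻¹ ∘ E)`, and since signs square to `1`,
`sgn σ · ∏ i, sgn ρᵢ = sgn (F⁻¹ ∘ E)` does not depend on `σ`.
-/

/-- Given row and column colorings `cr cc : Fin n → Fin 3` with fibers of equal sizes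
`k i`, enumerated by bijections `e i`, `f i`, a color-preserving permutation `σ`
(one with `cc (σ x) = cr x` for all `x`) restricts, for each color `i`, to the
permutation `(f i)⁻¹ ∘ σ ∘ (e i)` of `Fin (k i)`. -/
def restrictPerm {n : ℕ} (cr cc : Fin n → Fin 3) (k : Fin 3 → ℕ)
    (e : ∀ i : Fin 3, Fin (k i) ≃ {x : Fin n // cr x = i})
    (f : ∀ i : Fin 3, Fin (k i) ≃ {x : Fin n // cc x = i})
    (σ : Equiv.Perm (Fin n)) (hσ : ∀ x : Fin n, cc (σ x) = cr x) (i : Fin 3) :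
    Equiv.Perm (Fin (k i)) :=
  (e i).trans ((σ.subtypeEquiv (fun a => by rw [hσ a])).trans (f i).symm)

namespace Equiv.Perm

variable {ι : Type*} {κ : ι → Type*} [DecidableEq ι]

theorem sigmaCongrRight_mulSingle (i : ι) (p : Perm (κ i)) :
    sigmaCongrRight (Pi.mulSingle i p) = p.extendDomain (sigmaSubtype i).symm := by
  ext ⟨j, b⟩ : 1
  by_cases hj : j = i
  · subst hj
    rw [extendDomain_apply_subtype p (sigmaSubtype j).symm (b := ⟨j, b⟩) rfl]
    simp [sigmaSubtype]
  · rw [extendDomain_apply_not_subtype p (sigmaSubtype i).symm (b := ⟨j, b⟩) hj]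
    simp [Pi.mulSingle_eq_of_ne hj]

variable [Fintype ι] [∀ i, Fintype (κ i)] [∀ i, DecidableEq (κ i)]

theorem sign_sigmaCongrRight (ρ : ∀ i, Perm (κ i)) :
    sign (sigmaCongrRight ρ) = ∏ i, sign (ρ i) := by
  have hom : sign.comp (sigmaCongrRightHom κ) = ∏ i, sign.comp (Pi.evalMonoidHom _ i) :=
    MonoidHom.pi_ext fun i p => by
      rw [MonoidHom.finsetProd_apply, Fintype.prod_eq_single i]
      · simp [sigmaCongrRightHom, sigmaCongrRight_mulSingle]
      · intro j hj
        simp [Pi.mulSingle_eq_of_ne hj]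
  simpa using DFunLike.congr_fun hom ρ

theorem sign_trans_sigmaCongrRight_trans_mul_prod_sign {α : Type*} [Fintype α] [DecidableEq α]
    (A B : α ≃ Σ i, κ i) (ρ : ∀ i, Perm (κ i)) :
    sign (A.trans ((sigmaCongrRight ρ).trans B.symm)) * ∏ i, sign (ρ i)
      = sign (A.trans B.symm) := by
  rw [sign_trans_trans, sign_sigmaCongrRight, mul_right_comm, Int.units_mul_self, one_mul]

end Equiv.Perm

def fiberwiseEquiv {α ι : Type*} {κ : ι → Type*} (c : α → ι) (e : ∀ i, κ i ≃ {x // c x = i}) :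
    α ≃ Σ i, κ i :=
  (Equiv.sigmaFiberEquiv c).symm.trans (Equiv.sigmaCongrRight fun i => (e i).symm)

theorem fiberwiseEquiv_trans_sigmaCongrRight_restrictPerm {n : ℕ} (cr cc : Fin n → Fin 3)
    (k : Fin 3 → ℕ) (e : ∀ i : Fin 3, Fin (k i) ≃ {x : Fin n // cr x = i})
    (f : ∀ i : Fin 3, Fin (k i) ≃ {x : Fin n // cc x = i})
    (σ : Equiv.Perm (Fin n)) (hσ : ∀ x : Fin n, cc (σ x) = cr x) :
    (fiberwiseEquiv cr e).trans ((Equiv.sigmaCongrRight (restrictPerm cr cc k e f σ hσ)).trans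
      (fiberwiseEquiv cc f).symm) = σ := by
  ext x
  simp [fiberwiseEquiv, restrictPerm, Equiv.sigmaCongrRight_symm]

theorem sign_mul_prod_sign_restrictPerm {n : ℕ} (cr cc : Fin n → Fin 3) (k : Fin 3 → ℕ)
    (e : ∀ i : Fin 3, Fin (k i) ≃ {x : Fin n // cr x = i})
    (f : ∀ i : Fin 3, Fin (k i) ≃ {x : Fin n // cc x = i})
    (σ : Equiv.Perm (Fin n)) (hσ : ∀ x : Fin n, cc (σ x) = cr x) :
    Equiv.Perm.sign σ * ∏ i, Equiv.Perm.sign (restrictPerm cr cc k e f σ hσ i)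
      = Equiv.Perm.sign ((fiberwiseEquiv cr e).trans (fiberwiseEquiv cc f).symm) := by
  have h := Equiv.Perm.sign_trans_sigmaCongrRight_trans_mul_prod_sign (fiberwiseEquiv cr e)
    (fiberwiseEquiv cc f) (restrictPerm cr cc k e f σ hσ)
  rwa [fiberwiseEquiv_trans_sigmaCongrRight_restrictPerm] at h

/-- The ratio between the sign of a color-preserving permutation and the product of the
signs of its three color-restricted permutations does not depend on the permutation. -/
theorem sign_ratio_independent {n : ℕ} (cr cc : Fin n → Fin 3) (k : Fin 3 → ℕ)
    (e : ∀ i : Fin 3, Fin (k i) ≃ {x : Fin n // cr x = i})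
    (f : ∀ i : Fin 3, Fin (k i) ≃ {x : Fin n // cc x = i})
    (σ σ' : Equiv.Perm (Fin n))
    (hσ : ∀ x : Fin n, cc (σ x) = cr x) (hσ' : ∀ x : Fin n, cc (σ' x) = cr x) :
    Equiv.Perm.sign σ *
        ∏ i : Fin 3, Equiv.Perm.sign (restrictPerm cr cc k e f σ hσ i)
      = Equiv.Perm.sign σ' *
        ∏ i : Fin 3, Equiv.Perm.sign (restrictPerm cr cc k e f σ' hσ' i) := by
  rw [sign_mul_prod_sign_restrictPerm, sign_mul_prod_sign_restrictPerm]
end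

section
/- Let z₁ < z₂ < z₃ < z₄ < z₅ < z₆ be real numbers. Then the following six expressions sum to 1: Pr₁ = (z₃−z₂)(z₄−z₁)(z₅−z₂)(z₅−z₄)(z₆−z₁)(z₆−z₃) / [(z₃−z₁)(z₄−z₂)(z₅−z₃)(z₆−z₄)(z₅−z₁)(z₆−z₂)]; Pr₂ = (z₂−z₁)(z₄−z₁)(z₄−z₃)(z₅−z₂)(z₆−z₃)(z₆−z₅) / [(z₃−z₁)(z₄−z₂)(z₅−z₃)(z₆−z₄)(z₅−z₁)(z₆−z₂)]; Pr₃ = (z₃−z₂)(z₄−z₃)(z₆−z₁)(z₆−z₅) / [(z₃−z₁)(z₅−z₃)(z₆−z₄)(z₆−z₂)]; Pr₄ = (z₂−z₁)(z₄−z₃)(z₅−z₄)(z₆−z₁) / [(z₃−z₁)(z₄−z₂)(z₆−z₄)(z₅−z₁)]; Pr₅ = (z₂−z₁)(z₃−z₂)(z₅−z₄)(z₆−z₅) / [(z₄−z₂)(z₅−z₃)(z₆−z₂)(z₅−z₁)]; Pr₆ = 2(z₂−z₁)(z₃−z₂)(z₄−z₃)(z₅−z₄)(z₆−z₅)(z₆−z₁)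 / [(z₃−z₁)(z₄−z₂)(z₅−z₃)(z₆−z₄)(z₅−z₁)(z₆−z₂)]. -/
theorem web_probabilities_sum_eq_one {K : Type*} [Field K] (z₁ z₂ z₃ z₄ z₅ z₆ : K)
    (h₁₃ : z₁ ≠ z₃) (h₂₄ : z₂ ≠ z₄) (h₃₅ : z₃ ≠ z₅) (h₄₆ : z₄ ≠ z₆)
    (h₁₅ : z₁ ≠ z₅) (h₂₆ : z₂ ≠ z₆) :
    (z₃ - z₂) * (z₄ - z₁) * (z₅ - z₂) * (z₅ - z₄) * (z₆ - z₁) * (z₆ - z₃) /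
      ((z₃ - z₁) * (z₄ - z₂) * (z₅ - z₃) * (z₆ - z₄) * (z₅ - z₁) * (z₆ - z₂)) +
    (z₂ - z₁) * (z₄ - z₁) * (z₄ - z₃) * (z₅ - z₂) * (z₆ - z₃) * (z₆ - z₅) /
      ((z₃ - z₁) * (z₄ - z₂) * (z₅ - z₃) * (z₆ - z₄) * (z₅ - z₁) * (z₆ - z₂)) +
    (z₃ - z₂) * (z₄ - z₃) * (z₆ - z₁) * (z₆ - z₅) /
      ((z₃ - z₁) * (z₅ - z₃) * (z₆ - z₄) * (z₆ - z₂)) +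
    (z₂ - z₁) * (z₄ - z₃) * (z₅ - z₄) * (z₆ - z₁) /
      ((z₃ - z₁) * (z₄ - z₂) * (z₆ - z₄) * (z₅ - z₁)) +
    (z₂ - z₁) * (z₃ - z₂) * (z₅ - z₄) * (z₆ - z₅) /
      ((z₄ - z₂) * (z₅ - z₃) * (z₆ - z₂) * (z₅ - z₁)) +
    2 * (z₂ - z₁) * (z₃ - z₂) * (z₄ - z₃) * (z₅ - z₄) * (z₆ - z₅) * (z₆ - z₁) /
      ((z₃ - z₁) * (z₄ - z₂) * (z₅ - z₃) * (z₆ - z₄) * (z₅ - z₁) * (z₆ - z₂)) = 1 := by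
  field_simp
  ring

/-- The six limiting probabilities of the reduced web classes with node types
`(w,b,w,b,w,b)` for boundary points `z₁ < z₂ < z₃ < z₄ < z₅ < z₆` sum to `1`. -/
theorem six_web_probabilities_sum_to_one (z₁ z₂ z₃ z₄ z₅ z₆ : ℝ)
    (h₁ : z₁ < z₂) (h₂ : z₂ < z₃) (h₃ : z₃ < z₄) (h₄ : z₄ < z₅) (h₅ : z₅ < z₆) :
    (z₃ - z₂) * (z₄ - z₁) * (z₅ - z₂) * (z₅ - z₄) * (z₆ - z₁) * (z₆ - z₃) /
      ((z₃ - z₁) * (z₄ - z₂) * (z₅ - z₃) * (z₆ - z₄) * (z₅ - z₁) * (z₆ - z₂)) +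
    (z₂ - z₁) * (z₄ - z₁) * (z₄ - z₃) * (z₅ - z₂) * (z₆ - z₃) * (z₆ - z₅) /
      ((z₃ - z₁) * (z₄ - z₂) * (z₅ - z₃) * (z₆ - z₄) * (z₅ - z₁) * (z₆ - z₂)) +
    (z₃ - z₂) * (z₄ - z₃) * (z₆ - z₁) * (z₆ - z₅) /
      ((z₃ - z₁) * (z₅ - z₃) * (z₆ - z₄) * (z₆ - z₂)) +
    (z₂ - z₁) * (z₄ - z₃) * (z₅ - z₄) * (z₆ - z₁) /
      ((z₃ - z₁) * (z₄ - z₂) * (z₆ - z₄) * (z₅ - z₁)) +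
    (z₂ - z₁) * (z₃ - z₂) * (z₅ - z₄) * (z₆ - z₅) /
      ((z₄ - z₂) * (z₅ - z₃) * (z₆ - z₂) * (z₅ - z₁)) +
    2 * (z₂ - z₁) * (z₃ - z₂) * (z₄ - z₃) * (z₅ - z₄) * (z₆ - z₅) * (z₆ - z₁) /
      ((z₃ - z₁) * (z₄ - z₂) * (z₅ - z₃) * (z₆ - z₄) * (z₅ - z₁) * (z₆ - z₂)) = 1 := by
  exact web_probabilities_sum_eq_one z₁ z₂ z₃ z₄ z₅ z₆ (h₁.trans h₂).ne (h₂.trans h₃).ne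
    (h₃.trans h₄).ne (h₄.trans h₅).ne ((h₁.trans h₂).trans (h₃.trans h₄)).ne
    ((h₂.trans h₃).trans (h₄.trans h₅)).ne
end

section
/- Let z₁ < z₂ < z₃ < z₄ < z₅ < z₆ be real numbers and let X be the 3 × 3 real matrix with entries X_{ij} = 1/(z_{2j} − z_{2i−1}) for i,j ∈ {1,2,3}. Then det X ≠ 0 and |(X₁₂X₂₃X₃₁ − X₁₁X₂₃X₃₂) / det X| = (z₃−z₂)(z₄−z₃)(z₆−z₁)(z₆−z₅) / [(z₃−z₁)(z₅−z₃)(z₆−z₄)(z₆−z₂)]. -/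
/-!
The matrix `X` is the Cauchy matrix `1 / (y j - x i)` of the interlacing nodes
`x = (z₁, z₃, z₅)`, `y = (z₂, z₄, z₆)`. Its determinant is given by the Cauchy determinant
formula, and the web polynomial factors as `-X₁₂` times a `2 × 2` Cauchy minor, so the ratio is
a quotient of products of differences `z_j - z_i` with `i < j`, hence positive.
-/

namespace Matrix

variable {K : Type*} [Field K]

def cauchy {n : Type*} (x y : n → K) : Matrix n n K :=
  of fun i j => 1 / (y j - x i)

@[simp]
theorem cauchy_apply {n : Type*} (x y : n → K) (i j : n) : cauchy x y i j = 1 / (y j - x i) :=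
  rfl

section FinThree

variable {x y : Fin 3 → K}

theorem det_cauchy_fin_three (hxy : ∀ i j, y j ≠ x i) :
    (cauchy x y).det =
      (x 1 - x 0) * (x 2 - x 0) * (x 2 - x 1) * (y 0 - y 1) * (y 0 - y 2) * (y 1 - y 2) /
        ∏ i, ∏ j, (y j - x i) := by
  rw [det_fin_three]
  simp only [cauchy_apply, Fin.prod_univ_three]
  field_simp [sub_ne_zero.2 (hxy _ _)]
  ring

theorem det_cauchy_fin_three_ne_zero (hx : Function.Injective x) (hy : Function.Injective y)
    (hxy : ∀ i j, y j ≠ x i) : (cauchy x y).det ≠ 0 := by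
  rw [det_cauchy_fin_three hxy]
  simp [Fin.prod_univ_three, sub_eq_zero, hx.eq_iff, hy.eq_iff, hxy]

theorem cauchy_web_polynomial_fin_three (hxy : ∀ i j, y j ≠ x i) :
    cauchy x y 0 1 * cauchy x y 1 2 * cauchy x y 2 0 -
        cauchy x y 0 0 * cauchy x y 1 2 * cauchy x y 2 1 =
      (x 0 - x 2) * (y 0 - y 1) /
        ((y 0 - x 0) * (y 1 - x 0) * (y 0 - x 2) * (y 1 - x 2) * (y 2 - x 1)) := by
  simp only [cauchy_apply]
  field_simp [sub_ne_zero.2 (hxy _ _)]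
  ring

theorem cauchy_web_polynomial_div_det_fin_three (hx : Function.Injective x)
    (hy : Function.Injective y) (hxy : ∀ i j, y j ≠ x i) :
    (cauchy x y 0 1 * cauchy x y 1 2 * cauchy x y 2 0 -
        cauchy x y 0 0 * cauchy x y 1 2 * cauchy x y 2 1) / (cauchy x y).det =
      (x 1 - y 0) * (y 1 - x 1) * (y 2 - x 0) * (y 2 - x 2) /
        ((x 1 - x 0) * (x 2 - x 1) * (y 2 - y 1) * (y 2 - y 0)) := by
  rw [cauchy_web_polynomial_fin_three hxy, det_cauchy_fin_three hxy]
  simp only [Fin.prod_univ_three]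
  field_simp [sub_ne_zero.2 (hxy _ _), sub_ne_zero.2 (hx.ne _), sub_ne_zero.2 (hy.ne _)]
  ring

end FinThree

end Matrix

/-- For `z₁ < ⋯ < z₆` and the Cauchy matrix `X i j = 1/(z_{2j} - z_{2i-1})`, the
determinant is nonzero and `|(X₁₂X₂₃X₃₁ − X₁₁X₂₃X₃₂)/det X|` equals the stated product
formula: the limiting probability of the reduced web class pairing `z₁z₆`, `z₂z₃`, `z₄z₅`. -/
theorem six_point_nested_probability (z₁ z₂ z₃ z₄ z₅ z₆ : ℝ)
    (h₁ : z₁ < z₂) (h₂ : z₂ < z₃) (h₃ : z₃ < z₄) (h₄ : z₄ < z₅) (h₅ : z₅ < z₆)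
    (X : Matrix (Fin 3) (Fin 3) ℝ)
    (hX : X = !![1 / (z₂ - z₁), 1 / (z₄ - z₁), 1 / (z₆ - z₁);
                 1 / (z₂ - z₃), 1 / (z₄ - z₃), 1 / (z₆ - z₃);
                 1 / (z₂ - z₅), 1 / (z₄ - z₅), 1 / (z₆ - z₅)]) :
    X.det ≠ 0 ∧
    |(X 0 1 * X 1 2 * X 2 0 - X 0 0 * X 1 2 * X 2 1) / X.det| =
      (z₃ - z₂) * (z₄ - z₃) * (z₆ - z₁) * (z₆ - z₅) /
        ((z₃ - z₁) * (z₅ - z₃) * (z₆ - z₄) * (z₆ - z₂)) := by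
  have hXc : X = Matrix.cauchy ![z₁, z₃, z₅] ![z₂, z₄, z₆] := by
    subst hX; ext i j; fin_cases i <;> fin_cases j <;> rfl
  have hx : StrictMono ![z₁, z₃, z₅] :=
    Fin.strictMono_iff_lt_succ.2 fun i => by fin_cases i <;> simp <;> linarith
  have hy : StrictMono ![z₂, z₄, z₆] :=
    Fin.strictMono_iff_lt_succ.2 fun i => by fin_cases i <;> simp <;> linarith
  have hxy : ∀ i j, ![z₂, z₄, z₆] j ≠ ![z₁, z₃, z₅] i := by
    intro i j; fin_cases i <;> fin_cases j <;> simp <;> linarith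
  subst hXc
  refine ⟨Matrix.det_cauchy_fin_three_ne_zero hx.injective hy.injective hxy, ?_⟩
  rw [Matrix.cauchy_web_polynomial_div_det_fin_three hx.injective hy.injective hxy]
  have hpos : 0 < (z₃ - z₂) * (z₄ - z₃) * (z₆ - z₁) * (z₆ - z₅) /
      ((z₃ - z₁) * (z₅ - z₃) * (z₆ - z₄) * (z₆ - z₂)) := by
    apply div_pos <;> repeat' apply mul_pos
    all_goals linarith
  simpa using abs_of_pos hpos
end

section
/- Let n ≥ 1 and let w₁ < b₁ < w₂ < b₂ < … < w_{3n} < b_{3n} be 6n real numbers. Let C be the 3n × 3n real matrix with entries C_{ij} = 1/(b_j − w_i), and set I₁ = {1,…,n}, I₂ = {n+1,…,2n}, I₃ = {2n+1,…,3n}. Let C_{I_a, I_b} denote the n × n submatrix of C with rows indexed by I_a and columns by I_b. Then det C ≠ 0 and |det C_{I₁,I₂} · det C_{I₂,I₃} · det C_{I₃,I₁} / det C| = ( ∏ |w_i − b_j|, the product over all pairs (i,j) with i ∈ I_a, j ∈ I_b and (a,b) ∉ {(1,2),(2,3),(3,1)} ) / ( ∏ (w_j − w_i)(b_j − b_i),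 the product over all pairs i < j with i and j lying in different blocks among I₁,I₂,I₃ ). -/
/-!
Cauchy's determinant formula `det (1 / (y j - x i)) * ∏ i j, (y j - x i) =
∏_{i < j} (x i - x j) * (y j - y i)` applies both to `C` and to each block
`C_{I_a, I_{a+1}}`. In the quotient of the product of the three block determinants by `det C`,
the Vandermonde factors of pairs inside one block cancel, leaving the pairs from different blocks
in the denominator, and the factors `|w i - b j|` of the three cyclic blocks cancel, leaving the
remaining pairs in the numerator.
-/

/-- The index in `Fin (3*n)` of the `p`-th element of the `a`-th block
`I_{a+1} = {a·n + 1, …, (a+1)·n}`. -/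
def blockIdx (n : ℕ) (a : Fin 3) (p : Fin n) : Fin (3 * n) :=
  ⟨a.val * n + p.val, by
    calc a.val * n + p.val < a.val * n + n := by omega
      _ = (a.val + 1) * n := by ring
      _ ≤ 3 * n := Nat.mul_le_mul_right n a.isLt⟩

open Finset Matrix

theorem det_of_cons_one_row {R : Type*} [CommRing R] {m : ℕ} (M : Fin m → Fin (m + 1) → R) :
    det (of (Fin.cons (fun _ => 1) M : Fin (m + 1) → Fin (m + 1) → R)) =
      det (of fun i j => M i j.succ - M i 0) := by
  rw [← det_transpose, det_eq_of_forall_row_eq_smul_add_const (Fin.cons 0 1) 0 rfl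
    (B := of (Fin.cons (Fin.cons 1 fun i => M i 0) fun j =>
      Fin.cons 0 fun i => M i j.succ - M i 0))]
  · rw [det_succ_column_zero, Fin.sum_univ_succ, ← det_transpose]
    simp only [Fin.coe_ofNat_eq_mod, Nat.zero_mod, pow_zero, of_apply, Fin.cons_zero, mul_one,
      Fin.succAbove_zero, transpose_submatrix, one_mul, Fin.val_succ, Fin.cons_succ, mul_zero,
      zero_mul, sum_const_zero, add_zero]
    rfl
  · intro j i
    refine Fin.cases ?_ (fun j => ?_) j <;> refine Fin.cases ?_ (fun i => ?_) i <;> simp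

theorem Fin.prod_prod_Ioi_succ {M : Type*} [CommMonoid M] {m : ℕ}
    (f : Fin (m + 1) → Fin (m + 1) → M) :
    ∏ i, ∏ j ∈ Ioi i, f i j =
      (∏ j : Fin m, f 0 j.succ) * ∏ i : Fin m, ∏ j ∈ Ioi i, f i.succ j.succ := by
  simp only [Fin.prod_univ_succ, Fin.prod_Ioi_zero, Fin.prod_Ioi_succ]

def cauchyMatrix {ι K : Type*} [Field K] (x y : ι → K) : Matrix ι ι K :=
  of fun i j => (y j - x i)⁻¹

section Cauchy

variable {K : Type*} [Field K]

/-- Subtracting row `0` from the other rows, and then column `0` from the other columns, leaves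
the Cauchy matrix of the remaining points up to row and column factors. -/
theorem det_cauchyMatrix_succ {m : ℕ} (x y : Fin (m + 1) → K) (h : ∀ i j, x i ≠ y j) :
    det (cauchyMatrix x y) =
      (∏ j, (y j - x 0)⁻¹) *
        (∏ i : Fin m, (x 0 - x i.succ) * (y i.succ - y 0) * (y 0 - x i.succ)⁻¹) *
        det (cauchyMatrix (fun i : Fin m => x i.succ) fun j => y j.succ) := by
  have hrow : det (cauchyMatrix x y) = det (of fun i j => (y j - x 0)⁻¹ *
      (of fun i j => (Fin.cons 1 fun i => x i.succ - x 0 : Fin (m + 1) → K) i *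
        (of (Fin.cons (fun _ => 1) fun i j => (y j - x i.succ)⁻¹) :
          Matrix (Fin (m + 1)) (Fin (m + 1)) K) i j) i j) := by
    refine det_eq_of_forall_row_eq_smul_add_const (Fin.cons 0 1) 0 rfl fun i j => ?_
    refine Fin.cases ?_ (fun i => ?_) i
    · simp [cauchyMatrix]
    · have := sub_ne_zero.2 (h i.succ j).symm
      have := sub_ne_zero.2 (h 0 j).symm
      simp only [cauchyMatrix, of_apply, Fin.cons_succ, Pi.one_apply, Fin.cons_zero, mul_one,
        one_mul]
      field_simp
      ring
  have hcol : (of fun i j : Fin m => (y j.succ - x i.succ)⁻¹ - (y 0 - x i.succ)⁻¹) =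
      of fun i j => (y 0 - y j.succ) * (of fun i j => (y 0 - x i.succ)⁻¹ *
        cauchyMatrix (fun i : Fin m => x i.succ) (fun j => y j.succ) i j) i j := by
    ext i j
    have := sub_ne_zero.2 (h i.succ j.succ).symm
    have := sub_ne_zero.2 (h i.succ 0).symm
    simp only [of_apply, cauchyMatrix]
    field_simp
    ring
  have hsign : ∏ i : Fin m, (x 0 - x i.succ) * (y i.succ - y 0) * (y 0 - x i.succ)⁻¹ =
      (∏ i : Fin m, (x i.succ - x 0)) * (∏ i : Fin m, (y 0 - y i.succ)) *
        ∏ i : Fin m, (y 0 - x i.succ)⁻¹ := by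
    simp only [← prod_mul_distrib]
    exact prod_congr rfl fun _ _ => by ring
  rw [hrow, det_mul_row, det_mul_column, det_of_cons_one_row, hcol, det_mul_row, det_mul_column,
    Fin.prod_cons, one_mul, hsign]
  ring

theorem det_cauchyMatrix_mul_prod {m : ℕ} (x y : Fin m → K) (h : ∀ i j, x i ≠ y j) :
    det (cauchyMatrix x y) * ∏ i, ∏ j, (y j - x i) =
      (∏ i, ∏ j ∈ Ioi i, (x i - x j)) * ∏ i, ∏ j ∈ Ioi i, (y j - y i) := by
  induction m with
  | zero => simp
  | succ m ih =>
    have hx0 : ∏ j, (y j - x 0) ≠ 0 := prod_ne_zero_iff.2 fun j _ => sub_ne_zero.2 (h 0 j).symm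
    have hy0 : ∏ i : Fin m, (y 0 - x i.succ) ≠ 0 :=
      prod_ne_zero_iff.2 fun i _ => sub_ne_zero.2 (h _ 0).symm
    have hprod : ∏ i, ∏ j, (y j - x i) =
        (∏ j, (y j - x 0)) * ((∏ i : Fin m, (y 0 - x i.succ)) *
          ∏ i : Fin m, ∏ j : Fin m, (y j.succ - x i.succ)) := by
      rw [Fin.prod_univ_succ]
      congr 1
      simp only [Fin.prod_univ_succ, prod_mul_distrib]
    rw [det_cauchyMatrix_succ x y h, hprod, Fin.prod_prod_Ioi_succ, Fin.prod_prod_Ioi_succ]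
    simp only [prod_mul_distrib, prod_inv_distrib]
    field_simp
    rw [mul_assoc, ih _ _ fun i j => h _ _]
    ring

variable [LinearOrder K] [IsStrictOrderedRing K]

theorem abs_det_cauchyMatrix_mul_prod {m : ℕ} (x y : Fin m → K) (h : ∀ i j, x i ≠ y j) :
    |det (cauchyMatrix x y)| * ∏ i, ∏ j, |x i - y j| =
      (∏ i, ∏ j ∈ Ioi i, |x j - x i|) * ∏ i, ∏ j ∈ Ioi i, |y j - y i| := by
  simpa [abs_mul, abs_prod, abs_sub_comm] using congrArg abs (det_cauchyMatrix_mul_prod x y h)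

theorem prod_prod_Ioi_abs_sub_ne_zero {m : ℕ} {x : Fin m → K} (hx : Function.Injective x) :
    ∏ i, ∏ j ∈ Ioi i, |x j - x i| ≠ 0 :=
  prod_ne_zero_iff.2 fun _ _ => prod_ne_zero_iff.2 fun _ hj =>
    abs_ne_zero.2 (sub_ne_zero.2 (hx.ne (mem_Ioi.1 hj).ne'))

theorem abs_det_cyclicBlocks_mul_prod {n : ℕ} (x y : Fin (3 * n) → K)
    (h : ∀ i j, x i ≠ y j) :
    |det (of fun p q => cauchyMatrix x y (blockIdx n 0 p) (blockIdx n 1 q)) *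
        det (of fun p q => cauchyMatrix x y (blockIdx n 1 p) (blockIdx n 2 q)) *
        det (of fun p q => cauchyMatrix x y (blockIdx n 2 p) (blockIdx n 0 q))| *
      ((∏ p, ∏ q, |x (blockIdx n 0 p) - y (blockIdx n 1 q)|) *
        (∏ p, ∏ q, |x (blockIdx n 1 p) - y (blockIdx n 2 q)|) *
        ∏ p, ∏ q, |x (blockIdx n 2 p) - y (blockIdx n 0 q)|) =
      (∏ a, ∏ p, ∏ q ∈ Ioi p, |x (blockIdx n a q) - x (blockIdx n a p)|) *
        ∏ a, ∏ p, ∏ q ∈ Ioi p, |y (blockIdx n a q) - y (blockIdx n a p)| := by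
  have hblock : ∀ a c : Fin 3,
      |det (of fun p q => cauchyMatrix x y (blockIdx n a p) (blockIdx n c q))| *
          ∏ p, ∏ q, |x (blockIdx n a p) - y (blockIdx n c q)| =
        (∏ p, ∏ q ∈ Ioi p, |x (blockIdx n a q) - x (blockIdx n a p)|) *
          ∏ p, ∏ q ∈ Ioi p, |y (blockIdx n c q) - y (blockIdx n c p)| := fun a c =>
    abs_det_cauchyMatrix_mul_prod _ _ fun _ _ => h _ _
  rw [abs_mul, abs_mul, mul_mul_mul_comm, mul_mul_mul_comm |_|, hblock, hblock, hblock]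
  simp only [Fin.prod_univ_three]
  ring

end Cauchy

section Blocks

variable {n : ℕ} {M : Type*} [CommMonoid M]

theorem blockIdx_eq_finProdFinEquiv (a : Fin 3) (p : Fin n) :
    blockIdx n a p = finProdFinEquiv (a, p) :=
  Fin.ext <| by simp [blockIdx, finProdFinEquiv, add_comm, mul_comm]

theorem blockIdx_val_div (a : Fin 3) (p : Fin n) : (blockIdx n a p).val / n = a.val := by
  have := p.pos
  simp [blockIdx, Nat.add_div_of_dvd_right, Nat.div_eq_of_lt p.isLt, this]

theorem blockIdx_lt_blockIdx_iff (a : Fin 3) (p q : Fin n) :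
    blockIdx n a p < blockIdx n a q ↔ p < q := by
  rw [Fin.lt_def, Fin.lt_def]
  simp [blockIdx]

theorem prod_blockIdx (f : Fin (3 * n) → M) : ∏ i, f i = ∏ a, ∏ p, f (blockIdx n a p) := by
  simp only [blockIdx_eq_finProdFinEquiv, ← Fintype.prod_prod_type', finProdFinEquiv.prod_comp]

theorem prod_prod_eq_cyclicBlocks_mul (g : Fin (3 * n) → Fin (3 * n) → M) :
    ∏ i, ∏ j, g i j =
      (∏ p, ∏ q, g (blockIdx n 0 p) (blockIdx n 1 q)) *
        (∏ p, ∏ q, g (blockIdx n 1 p) (blockIdx n 2 q)) *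
        (∏ p, ∏ q, g (blockIdx n 2 p) (blockIdx n 0 q)) *
        ∏ x ∈ univ.filter (fun x : Fin (3 * n) × Fin (3 * n) =>
          ¬ ((x.1.val / n, x.2.val / n) = (0, 1) ∨ (x.1.val / n, x.2.val / n) = (1, 2) ∨
            (x.1.val / n, x.2.val / n) = (2, 0))), g x.1 x.2 := by
  rw [← Fintype.prod_prod_type', ← prod_filter_mul_prod_filter_not _
    (fun x : Fin (3 * n) × Fin (3 * n) => (x.1.val / n, x.2.val / n) = (0, 1) ∨
      (x.1.val / n, x.2.val / n) = (1, 2) ∨ (x.1.val / n, x.2.val / n) = (2, 0))]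
  congr 1
  rw [prod_filter, Fintype.prod_prod_type, prod_blockIdx]
  simp only [prod_blockIdx (fun j => ite _ _ _), blockIdx_val_div]
  simp [Fin.prod_univ_three]

theorem prod_prod_Ioi_eq_diagBlocks_mul (g : Fin (3 * n) → Fin (3 * n) → M) :
    ∏ i, ∏ j ∈ Ioi i, g i j =
      (∏ a, ∏ p, ∏ q ∈ Ioi p, g (blockIdx n a p) (blockIdx n a q)) *
        ∏ x ∈ univ.filter (fun x : Fin (3 * n) × Fin (3 * n) =>
          x.1 < x.2 ∧ x.1.val / n ≠ x.2.val / n), g x.1 x.2 := by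
  have hIoi : ∀ {k : ℕ} (f : Fin k → Fin k → M),
      ∏ i, ∏ j ∈ Ioi i, f i j = ∏ i, ∏ j, if i < j then f i j else 1 := fun f => by
    simp only [← prod_filter, filter_lt_eq_Ioi]
  rw [hIoi, ← Fintype.prod_prod_type', ← prod_filter,
    ← prod_filter_mul_prod_filter_not _
      (fun x : Fin (3 * n) × Fin (3 * n) => x.1.val / n = x.2.val / n),
    filter_filter, filter_filter]
  congr 1
  rw [prod_filter, Fintype.prod_prod_type, prod_blockIdx]
  simp only [prod_blockIdx (fun j => ite _ _ _), blockIdx_val_div, Fin.val_inj, hIoi]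
  simp only [and_comm (a := blockIdx _ _ _ < _), ite_and, prod_ite_irrel, prod_const_one,
    prod_ite_eq, mem_univ, if_true, blockIdx_lt_blockIdx_iff]

end Blocks

theorem div_eq_div_of_mul_eq_of_mul_eq {K : Type*} [Field K] {a c x N u v D₁ D₂ : K}
    (ha : a * x = u * v) (hc : c * (x * N) = u * D₁ * (v * D₂)) (hxN : x * N ≠ 0)
    (hu : u * D₁ ≠ 0) (hv : v * D₂ ≠ 0) : c ≠ 0 ∧ a / c = N / (D₁ * D₂) := by
  have hc0 : c ≠ 0 := by
    rintro rfl
    exact mul_ne_zero hu hv (by rw [← hc, zero_mul])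
  refine ⟨hc0, ?_⟩
  rw [div_eq_div_iff hc0 (mul_ne_zero (right_ne_zero_of_mul hu) (right_ne_zero_of_mul hv))]
  apply mul_left_cancel₀ (left_ne_zero_of_mul hxN)
  linear_combination (D₁ * D₂) * ha - hc

theorem honeycomb_probability_product_form_general (n : ℕ)
    (w b : Fin (3 * n) → ℝ)
    (hwb : ∀ i : Fin (3 * n), w i < b i)
    (hbw : ∀ i j : Fin (3 * n), i < j → b i < w j)
    (C : Matrix (Fin (3 * n)) (Fin (3 * n)) ℝ)
    (hC : ∀ i j : Fin (3 * n), C i j = 1 / (b j - w i)) :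
    C.det ≠ 0 ∧
    |(Matrix.det (Matrix.of fun p q : Fin n => C (blockIdx n 0 p) (blockIdx n 1 q)) *
      Matrix.det (Matrix.of fun p q : Fin n => C (blockIdx n 1 p) (blockIdx n 2 q)) *
      Matrix.det (Matrix.of fun p q : Fin n => C (blockIdx n 2 p) (blockIdx n 0 q))) /
        C.det| =
      (∏ p ∈ Finset.univ.filter
          (fun p : Fin (3 * n) × Fin (3 * n) =>
            ¬ ((p.1.val / n, p.2.val / n) = (0, 1) ∨
               (p.1.val / n, p.2.val / n) = (1, 2) ∨
               (p.1.val / n, p.2.val / n) = (2, 0))),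
          |w p.1 - b p.2|) /
      (∏ p ∈ Finset.univ.filter
          (fun p : Fin (3 * n) × Fin (3 * n) =>
            p.1 < p.2 ∧ p.1.val / n ≠ p.2.val / n),
          ((w p.2 - w p.1) * (b p.2 - b p.1))) := by
  have hw : StrictMono w := fun i j h => (hwb i).trans (hbw i j h)
  have hb : StrictMono b := fun i j h => (hbw i j h).trans (hwb j)
  have hne : ∀ i j, w i ≠ b j := fun i j => by
    rcases le_or_gt i j with h | h
    · exact ((hwb i).trans_le (hb.monotone h)).ne
    · exact (hbw j i h).ne'
  obtain rfl : C = cauchyMatrix w b := Matrix.ext fun i j => by simp [hC, cauchyMatrix]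
  have hwb_prod : ∏ i, ∏ j, |w i - b j| ≠ 0 := prod_ne_zero_iff.2 fun i _ =>
    prod_ne_zero_iff.2 fun j _ => abs_ne_zero.2 (sub_ne_zero.2 (hne i j))
  have hw_prod := prod_prod_Ioi_abs_sub_ne_zero hw.injective
  have hb_prod := prod_prod_Ioi_abs_sub_ne_zero hb.injective
  have hfull := abs_det_cauchyMatrix_mul_prod w b hne
  rw [prod_prod_eq_cyclicBlocks_mul] at hfull hwb_prod
  rw [prod_prod_Ioi_eq_diagBlocks_mul, prod_prod_Ioi_eq_diagBlocks_mul] at hfull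
  rw [prod_prod_Ioi_eq_diagBlocks_mul] at hw_prod hb_prod
  obtain ⟨hdet, hratio⟩ := div_eq_div_of_mul_eq_of_mul_eq
    (abs_det_cyclicBlocks_mul_prod w b hne) hfull hwb_prod hw_prod hb_prod
  refine ⟨abs_ne_zero.1 hdet, ?_⟩
  rw [abs_div, hratio, ← prod_mul_distrib]
  refine congrArg _ (prod_congr rfl fun x hx => ?_)
  have hx := (mem_filter.1 hx).2.1
  rw [abs_of_pos (sub_pos.2 (hw hx)), abs_of_pos (sub_pos.2 (hb hx))]

/-- Scaling-limit probability of the order-`n` triangular honeycomb web (up to its trace):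
for interleaved boundary points `w₁ < b₁ < ⋯ < w_{3n} < b_{3n}` and the Cauchy matrix
`C i j = 1/(b j - w i)`, the quotient of the product of the three off-diagonal block
determinants by `det C` has the stated closed product form. -/
theorem honeycomb_probability_product_form (n : ℕ) (hn : 1 ≤ n)
    (w b : Fin (3 * n) → ℝ)
    (hwb : ∀ i : Fin (3 * n), w i < b i)
    (hbw : ∀ i j : Fin (3 * n), i < j → b i < w j)
    (C : Matrix (Fin (3 * n)) (Fin (3 * n)) ℝ)
    (hC : ∀ i j : Fin (3 * n), C i j = 1 / (b j - w i)) :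
    C.det ≠ 0 ∧
    |(Matrix.det (Matrix.of fun p q : Fin n => C (blockIdx n 0 p) (blockIdx n 1 q)) *
      Matrix.det (Matrix.of fun p q : Fin n => C (blockIdx n 1 p) (blockIdx n 2 q)) *
      Matrix.det (Matrix.of fun p q : Fin n => C (blockIdx n 2 p) (blockIdx n 0 q))) /
        C.det| =
      (∏ p ∈ Finset.univ.filter
          (fun p : Fin (3 * n) × Fin (3 * n) =>
            ¬ ((p.1.val / n, p.2.val / n) = (0, 1) ∨
               (p.1.val / n, p.2.val / n) = (1, 2) ∨
               (p.1.val / n, p.2.val / n) = (2, 0))),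
          |w p.1 - b p.2|) /
      (∏ p ∈ Finset.univ.filter
          (fun p : Fin (3 * n) × Fin (3 * n) =>
            p.1 < p.2 ∧ p.1.val / n ≠ p.2.val / n),
          ((w p.2 - w p.1) * (b p.2 - b p.1))) :=
  honeycomb_probability_product_form_general n w b hwb hbw C hC
end
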